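/- Let k be a field of characteristic ≠ 2,3 and define H_{j'}(j) = j²·((6912-j)³/(27j²) - j') ∈ k[j] (i.e. H_{j'}(j) = (6912-j)³/27 - j'·j²). Then: (1) if j' = 1728, H_{1728}(j) = -(1/27)(j-1728)(j+8·1728)²; (2) if j' = 0, H_{0}(j) = -(1/27)(j - 4·1728)³; (3) if j' ∉ {0, 1728}, then H_{j'} has no repeated roots in any field extension. -/
import Mathlib


open Polynomial

/-- The polynomial `H_{j'}(j) = (6912 - j)³/27 - j'·j²`. -/
noncomputable def Hpoly {K : Type*} [Field K] (j' : K) : Polynomial K :=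
  C (27 : K)⁻¹ * (C 6912 - X) ^ 3 - C j' * X ^ 2

/-- factorizations of `H_{1728}` and `H_0`, and separability (no repeated
roots in any field extension) of `H_{j'}` for `j' ∉ {0, 1728}`. -/
theorem Hpoly_roots {K : Type*} [Field K] (h2 : (2 : K) ≠ 0) (h3 : (3 : K) ≠ 0) :
    Hpoly (1728 : K) = -(C (27 : K)⁻¹) * (X - C 1728) * (X + C (8 * 1728)) ^ 2 ∧
    Hpoly (0 : K) = -(C (27 : K)⁻¹) * (X - C (4 * 1728)) ^ 3 ∧
    ∀ j' : K, j' ≠ 0 → j' ≠ 1728 → (Hpoly j').Separable := by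
  have h27 : (27 : K) ≠ 0 := by
    have := mul_ne_zero (mul_ne_zero h3 h3) h3
    norm_num at this
    exact this
  have hC27 : (C (27 : K)) ≠ 0 := by simpa using h27
  have e : C (27 : K) * C (27 : K)⁻¹ = 1 := by
    rw [← C_mul, mul_inv_cancel₀ h27, C_1]
  refine ⟨?_, ?_, ?_⟩
  · apply mul_left_cancel₀ hC27
    calc C (27 : K) * Hpoly (1728 : K)
        = (C (27:K) * C (27:K)⁻¹) * (C 6912 - X) ^ 3 - C (27 * 1728 : K) * X ^ 2 := by
          rw [Hpoly, map_mul]; ring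
      _ = (C 6912 - X) ^ 3 - C (27 * 1728 : K) * X ^ 2 := by rw [e, one_mul]
      _ = -((X - C 1728) * (X + C (8 * 1728)) ^ 2) := by
          simp only [map_mul, map_ofNat]
          ring
      _ = C (27:K) * (-(C (27 : K)⁻¹) * (X - C 1728) * (X + C (8 * 1728)) ^ 2) := by
          have h : C (27:K) * (-(C (27 : K)⁻¹) * (X - C 1728) * (X + C (8 * 1728)) ^ 2)
              = -(C (27:K) * C (27:K)⁻¹) * ((X - C 1728) * (X + C (8 * 1728)) ^ 2) := by ring
          rw [h, e]; ring
  · apply mul_left_cancel₀ hC27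
    calc C (27 : K) * Hpoly (0 : K)
        = (C (27:K) * C (27:K)⁻¹) * (C 6912 - X) ^ 3 := by
          rw [Hpoly, map_zero]; ring
      _ = (C 6912 - X) ^ 3 := by rw [e, one_mul]
      _ = -((X - C (4 * 1728)) ^ 3) := by
          simp only [map_mul, map_ofNat]
          ring
      _ = C (27:K) * (-(C (27 : K)⁻¹) * (X - C (4 * 1728)) ^ 3) := by
          have h : C (27:K) * (-(C (27 : K)⁻¹) * (X - C (4 * 1728)) ^ 3)
              = -(C (27:K) * C (27:K)⁻¹) * ((X - C (4 * 1728)) ^ 3) := by ring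
          rw [h, e]; ring
  · intro j' hj0 hj1
    -- the cleared-denominator polynomial g = 27 * Hpoly j'
    set g : K[X] := (C 6912 - X) ^ 3 - C (27 * j') * X ^ 2 with hg
    have hH : Hpoly j' = C (27 : K)⁻¹ * g := by
      rw [Hpoly, hg, mul_sub, ← mul_assoc, ← C_mul, inv_mul_cancel_left₀ h27]
    have hdg : derivative g = C (41472 - 54 * j') * X - C 3 * X ^ 2 - C 143327232 := by
      rw [hg]
      simp only [derivative_sub, derivative_pow, derivative_mul, derivative_C, derivative_X]
      simp only [map_sub, map_mul, map_ofNat, map_natCast, Nat.cast_ofNat, C_eq_natCast]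
      push_cast
      ring
    -- Bezout witnesses
    set A : K[X] := C (3 * j' - 4608) * X + C (54 * j' ^ 2 - 124416 * j' + 55738368) with hA
    set B : K[X] := C (1536 - j') * X ^ 2 + C (62208 * j' - 27 * j' ^ 2 - 29196288) * X +
      C (128421199872 - 71663616 * j') with hB
    have hd : (17832200896512 : K) * (j' ^ 2 - 1728 * j') ≠ 0 := by
      apply mul_ne_zero
      · have : (17832200896512 : K) = 2 ^ 25 * 3 ^ 12 := by norm_num
        rw [this]
        exact mul_ne_zero (pow_ne_zero _ h2) (pow_ne_zero _ h3)
      · have : j' ^ 2 - 1728 * j' = j' * (j' - 1728) := by ring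
        rw [this]
        exact mul_ne_zero hj0 (sub_ne_zero.mpr hj1)
    have key : A * g + B * derivative g
        = C ((17832200896512 : K) * (j' ^ 2 - 1728 * j')) := by
      rw [hdg, hA, hB, hg]
      simp only [map_mul, map_sub, map_add, map_pow, map_ofNat]
      ring
    have hsepg : g.Separable := by
      refine ⟨C ((17832200896512 : K) * (j' ^ 2 - 1728 * j'))⁻¹ * A,
        C ((17832200896512 : K) * (j' ^ 2 - 1728 * j'))⁻¹ * B, ?_⟩
      calc C ((17832200896512:K) * (j' ^ 2 - 1728 * j'))⁻¹ * A * g +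
            C ((17832200896512:K) * (j' ^ 2 - 1728 * j'))⁻¹ * B * derivative g
          = C ((17832200896512:K) * (j' ^ 2 - 1728 * j'))⁻¹ * (A * g + B * derivative g) := by
            ring
        _ = 1 := by rw [key, ← C_mul, inv_mul_cancel₀ hd, C_1]
    -- transfer separability through the unit C 27⁻¹
    rw [hH]
    obtain ⟨a, b, hab⟩ := hsepg
    refine ⟨C (27 : K) * a, C (27 : K) * b, ?_⟩
    rw [derivative_C_mul]
    calc C (27:K) * a * (C (27:K)⁻¹ * g) + C (27:K) * b * (C (27:K)⁻¹ * derivative g)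
        = (C (27:K) * C (27:K)⁻¹) * (a * g + b * derivative g) := by ring
      _ = 1 := by rw [e, hab, one_mul]
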